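/- For any a < b in ℝ, Φ(b)·φ(a) - Φ(a)·φ(b) > 0, where φ and Φ are the standard normal PDF and CDF. -/
import Mathlib


open MeasureTheory Real Set Filter

noncomputable def stdPdf (x : ℝ) : ℝ := (Real.sqrt (2 * Real.pi))⁻¹ * Real.exp (-(x ^ 2) / 2)

noncomputable def stdCdf (x : ℝ) : ℝ := ∫ v in Set.Iio x, stdPdf v

noncomputable def Phi2 (μ ν ρ : ℝ) : ℝ :=
  ∫ v in Set.Iio μ, stdCdf ((ν - ρ * v) / Real.sqrt (1 - ρ ^ 2)) * stdPdf v

noncomputable def phi2 (μ ν ρ : ℝ) : ℝ :=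
  (2 * Real.pi * Real.sqrt (1 - ρ ^ 2))⁻¹ *
    Real.exp (-(μ ^ 2 - 2 * ρ * μ * ν + ν ^ 2) / (2 * (1 - ρ ^ 2)))

lemma stdPdf_pos (x : ℝ) : 0 < stdPdf x := by
  unfold stdPdf
  positivity

lemma stdPdf_integrable : Integrable stdPdf := by
  have h : Integrable fun x : ℝ => Real.exp (-(1/2 : ℝ) * x ^ 2) :=
    integrable_exp_neg_mul_sq (by norm_num)
  have : (fun x : ℝ => Real.exp (-(1/2 : ℝ) * x ^ 2)) = fun x => Real.exp (-(x ^ 2) / 2) := by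
    funext x; ring_nf
  rw [this] at h
  exact h.const_mul _

lemma stdCdf_shift (a c : ℝ) :
    stdCdf (a + c) = ∫ v in Set.Iio a, stdPdf (v + c) := by
  have hmeas : MeasurableSet (Set.Iio (a + c)) := measurableSet_Iio
  have h1 : stdCdf (a + c) = ∫ v, (Set.Iio (a + c)).indicator stdPdf v := by
    rw [integral_indicator hmeas]; rfl
  rw [h1, ← integral_add_right_eq_self (fun v => (Set.Iio (a + c)).indicator stdPdf v) c]
  rw [← integral_indicator (measurableSet_Iio (a := a))]
  congr 1
  funext v
  by_cases hv : v < a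
  · rw [Set.indicator_of_mem (by exact hv : v ∈ Set.Iio a),
      Set.indicator_of_mem (by simpa using by linarith : v + c ∈ Set.Iio (a + c))]
  · rw [Set.indicator_of_notMem (by simpa using hv),
      Set.indicator_of_notMem (by simp; linarith [not_lt.mp hv])]

theorem stmt9 (a b : ℝ) (hab : a < b) :
    0 < stdCdf b * stdPdf a - stdCdf a * stdPdf b := by
  set c := b - a with hc
  have hcpos : 0 < c := by simp [hc]; linarith
  have hb : b = a + c := by ring
  -- integrability
  have hint1 : IntegrableOn (fun v => stdPdf (v + c) * stdPdf a) (Set.Iio a) := by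
    exact ((stdPdf_integrable.comp_add_right c).mul_const _).integrableOn
  have hint2 : IntegrableOn (fun v => stdPdf v * stdPdf b) (Set.Iio a) := by
    exact (stdPdf_integrable.mul_const _).integrableOn
  -- pointwise strict inequality on Iio a
  have hpt : ∀ v ∈ Set.Iio a, stdPdf v * stdPdf b < stdPdf (v + c) * stdPdf a := by
    intro v hv
    have hv' : v < a := hv
    unfold stdPdf
    rw [mul_mul_mul_comm, mul_mul_mul_comm _ (Real.exp _), ← Real.exp_add, ← Real.exp_add]
    have hK : (0:ℝ) < (Real.sqrt (2 * Real.pi))⁻¹ * (Real.sqrt (2 * Real.pi))⁻¹ := by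
      positivity
    refine mul_lt_mul_of_pos_left (Real.exp_lt_exp.mpr ?_) hK
    have : v * c < a * c := mul_lt_mul_of_pos_right hv' hcpos
    rw [hb]
    ring_nf
    nlinarith
  -- the difference function is positive on Iio a
  set f : ℝ → ℝ := fun v => stdPdf (v + c) * stdPdf a - stdPdf v * stdPdf b with hf
  have hfint : IntegrableOn f (Set.Iio a) := hint1.sub hint2
  have hfpos : ∀ v ∈ Set.Iio a, 0 < f v := fun v hv => sub_pos.mpr (hpt v hv)
  have hpos : 0 < ∫ v in Set.Iio a, f v := by
    rw [setIntegral_pos_iff_support_of_nonneg_ae ?_ hfint]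
    · have hsub : Set.Iio a ⊆ Function.support f ∩ Set.Iio a := fun v hv =>
        ⟨(hfpos v hv).ne', hv⟩
      refine lt_of_lt_of_le ?_ (measure_mono hsub)
      simp [Real.volume_Iio]
    · filter_upwards [ae_restrict_mem measurableSet_Iio] with v hv
      exact (hfpos v hv).le
  have heq : (∫ v in Set.Iio a, f v)
      = stdCdf b * stdPdf a - stdCdf a * stdPdf b := by
    rw [hf, integral_sub hint1 hint2, integral_mul_const, integral_mul_const,
      ← stdCdf_shift a c, ← hb]
    rfl
  linarith [heq ▸ hpos]
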